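/- Suppose F is β-smooth (β > 0) and satisfies the α-PL condition (α > 0) with minimum value F*. Let c > 0 and M_U > 0, let w ∈ ℝ^d satisfy F(w) > F* and M²(w) ≤ M_U², let the step size be γ = α/(β·(α + M_U²/(2c))), and let the batch size B ≥ 1 satisfy B ≥ c/(F(w) − F*). Then one step of mini-batch SGD contracts the expected suboptimality: E_s[F(w − γ g_s(w))] − F* ≤ (1 − α²/(β·(α + M_U²/(2c))))·(F(w) − F*). -/

import Mathlib

/-!
By the descent lemma for a `β`-smooth `F`, the step along a mini-batch gradient `g_s` satisfies
`F (w - γ g_s) ≤ F w - γ ⟪∇F w, g_s⟫ + β γ² ‖g_s‖² / 2`. Averaged over all `n ^ B` mini-batches,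
`g_s` has mean `∇F w` and second moment `M²(w) / B + (1 - 1 / B) ‖∇F w‖²`. The PL inequality gives
`‖∇F w‖² ≥ 2α (F w - F*)`, and the batch-size condition gives
`M²(w) / B ≤ M_U² (F w - F*) / c`; for the chosen `γ` (for which `βγ ≤ 1`) these combine into
the contraction factor `1 - αγ`.
-/

open scoped RealInnerProductSpace
open Finset

section Descent

variable {ι E : Type*} [NormedAddCommGroup E] [InnerProductSpace ℝ E] [CompleteSpace E]
  {F : E → ℝ} {β : ℝ}

theorem gradient_const_mul_sum [Fintype ι] {f : ι → E → ℝ} (hf : ∀ i, Differentiable ℝ (f i))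
    (c : ℝ) (x : E) :
    gradient (fun x => c * ∑ i, f i x) x = c • ∑ i, gradient (f i) x := by
  refine HasGradientAt.gradient ?_
  rw [hasGradientAt_iff_hasFDerivAt, map_smul, map_sum]
  simp only [toDual_gradient]
  exact (HasFDerivAt.fun_sum fun i _ => (hf i x).hasFDerivAt).const_mul c

theorem hasDerivAt_apply_add_smul (hF : Differentiable ℝ F) (x v : E) (t : ℝ) :
    HasDerivAt (fun t : ℝ => F (x + t • v)) ⟪gradient F (x + t • v), v⟫ t := by
  have hline : HasDerivAt (fun t : ℝ => x + t • v) v t := by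
    simpa using ((hasDerivAt_id t).smul_const v).const_add x
  rw [inner_gradient_left]
  exact (hF _).hasFDerivAt.comp_hasDerivAt t hline

theorem apply_add_le_of_gradient_lipschitz (hF : Differentiable ℝ F)
    (hsmooth : ∀ x y, ‖gradient F x - gradient F y‖ ≤ β * ‖x - y‖) (x v : E) :
    F (x + v) ≤ F x + ⟪gradient F x, v⟫ + β / 2 * ‖v‖ ^ 2 := by
  set g : ℝ → ℝ := fun t => F (x + t • v) - t * ⟪gradient F x, v⟫ - β / 2 * t ^ 2 * ‖v‖ ^ 2
  have hg (t : ℝ) :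
      HasDerivAt g (⟪gradient F (x + t • v) - gradient F x, v⟫ - β * t * ‖v‖ ^ 2) t :=
    (((hasDerivAt_apply_add_smul hF x v t).sub ((hasDerivAt_id t).mul_const _)).sub
      (((hasDerivAt_pow 2 t).const_mul (β / 2)).mul_const (‖v‖ ^ 2))).congr_deriv
      (by rw [inner_sub_left]; ring)
  have hg_nonpos : ∀ t ∈ interior (Set.Ici (0 : ℝ)),
      ⟪gradient F (x + t • v) - gradient F x, v⟫ - β * t * ‖v‖ ^ 2 ≤ 0 := by
    intro t ht
    rw [interior_Ici, Set.mem_Ioi] at ht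
    have hlip : ‖gradient F (x + t • v) - gradient F x‖ ≤ β * t * ‖v‖ := by
      simpa [norm_smul, abs_of_pos ht, mul_assoc] using hsmooth (x + t • v) x
    nlinarith [real_inner_le_norm (gradient F (x + t • v) - gradient F x) v, norm_nonneg v]
  have hg_anti := antitoneOn_of_hasDerivWithinAt_nonpos (convex_Ici 0)
    (fun t _ => (hg t).continuousAt.continuousWithinAt) (fun t _ => (hg t).hasDerivWithinAt)
    hg_nonpos
  have hg_le : g 1 ≤ g 0 := hg_anti Set.self_mem_Ici (Set.mem_Ici.2 zero_le_one) zero_le_one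
  simp only [g, one_smul, zero_smul, add_zero, one_mul, zero_mul, one_pow, sub_zero] at hg_le
  linarith

theorem inv_card_mul_sum_apply_sub_smul_le [Fintype ι] [Nonempty ι] (hF : Differentiable ℝ F)
    (hsmooth : ∀ x y, ‖gradient F x - gradient F y‖ ≤ β * ‖x - y‖) (x : E) (γ : ℝ) (u : ι → E) :
    (Fintype.card ι : ℝ)⁻¹ * ∑ i, F (x - γ • u i)
      ≤ F x - γ * ⟪gradient F x, (Fintype.card ι : ℝ)⁻¹ • ∑ i, u i⟫
        + β / 2 * γ ^ 2 * ((Fintype.card ι : ℝ)⁻¹ * ∑ i, ‖u i‖ ^ 2) := by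
  have hstep (i : ι) :
      F (x - γ • u i) ≤ F x - γ * ⟪gradient F x, u i⟫ + β / 2 * γ ^ 2 * ‖u i‖ ^ 2 := by
    have := apply_add_le_of_gradient_lipschitz hF hsmooth x (-(γ • u i))
    rwa [← sub_eq_add_neg, inner_neg_right, real_inner_smul_right, norm_neg, norm_smul,
      Real.norm_eq_abs, mul_pow, sq_abs, ← sub_eq_add_neg, ← mul_assoc] at this
  have hcard : (Fintype.card ι : ℝ) ≠ 0 := Nat.cast_ne_zero.2 Fintype.card_ne_zero
  calc (Fintype.card ι : ℝ)⁻¹ * ∑ i, F (x - γ • u i)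
      ≤ (Fintype.card ι : ℝ)⁻¹ * ∑ i, (F x - γ * ⟪gradient F x, u i⟫ + β / 2 * γ ^ 2 * ‖u i‖ ^ 2) :=
        mul_le_mul_of_nonneg_left (sum_le_sum fun i _ => hstep i) (by positivity)
    _ = _ := by
        simp only [sum_add_distrib, sum_sub_distrib, sum_const, card_univ, nsmul_eq_mul,
          ← mul_sum, real_inner_smul_right, ← inner_sum]
        field_simp

end Descent

section Sampling

variable {α E : Type*} [Fintype α] [NormedAddCommGroup E] [InnerProductSpace ℝ E]

theorem Fintype.sum_fin_succ_pi {B : ℕ} {M : Type*} [AddCommMonoid M]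
    (g : (Fin (B + 1) → α) → M) :
    ∑ s, g s = ∑ a, ∑ t : Fin B → α, g (Fin.cons a t) :=
  (Fintype.sum_equiv (Fin.consEquiv fun _ => α) _ g fun _ => rfl).symm.trans
    (Fintype.sum_prod_type _)

theorem card_smul_sum_pi_sum_apply (B : ℕ) (X : α → E) :
    (Fintype.card α : ℝ) • ∑ s : Fin B → α, ∑ j, X (s j)
      = ((B : ℝ) * Fintype.card α ^ B) • ∑ a, X a := by
  induction B with
  | zero => simp
  | succ B ih =>
    simp only [Fintype.sum_fin_succ_pi, Fin.sum_univ_succ, Fin.cons_zero, Fin.cons_succ,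
      sum_add_distrib, sum_const, card_univ, Fintype.card_fun, Fintype.card_fin,
      ← Nat.cast_smul_eq_nsmul ℝ, smul_add, ← smul_sum, smul_smul, ih]
    push_cast
    rw [← add_smul]
    ring_nf

theorem sq_card_mul_sum_pi_norm_sum_apply_sq (B : ℕ) (X : α → E) :
    (Fintype.card α : ℝ) ^ 2 * ∑ s : Fin B → α, ‖∑ j, X (s j)‖ ^ 2
      = (Fintype.card α : ℝ) ^ B * (B * Fintype.card α * ∑ a, ‖X a‖ ^ 2
          + B * (B - 1) * ‖∑ a, X a‖ ^ 2) := by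
  induction B with
  | zero => simp
  | succ B ih =>
    set N : ℝ := (Fintype.card α : ℝ)
    have hcross : N * ∑ a, ∑ t : Fin B → α, ⟪X a, ∑ j, X (t j)⟫
        = B * N ^ B * ‖∑ a, X a‖ ^ 2 := by
      have : ∑ a, ∑ t : Fin B → α, ⟪X a, ∑ j, X (t j)⟫
          = ⟪∑ a, X a, ∑ t : Fin B → α, ∑ j, X (t j)⟫ := by
        rw [sum_inner]
        exact sum_congr rfl fun a _ => (inner_sum _ _ _).symm
      rw [this, ← real_inner_smul_right, card_smul_sum_pi_sum_apply, real_inner_smul_right,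
        real_inner_self_eq_norm_sq]
    simp only [Fintype.sum_fin_succ_pi, Fin.sum_univ_succ, Fin.cons_zero, Fin.cons_succ,
      norm_add_sq_real, sum_add_distrib, sum_const, card_univ, Fintype.card_fun, Fintype.card_fin,
      nsmul_eq_mul, ← mul_sum]
    push_cast
    linear_combination (2 * N) * hcross + N * ih

/-- A mini-batch is a tuple `s : Fin B → α`, i.e. it is drawn uniformly with replacement. -/
noncomputable def miniBatchMean {B : ℕ} (X : α → E) (s : Fin B → α) : E :=
  (B : ℝ)⁻¹ • ∑ j, X (s j)

variable [Nonempty α] {B : ℕ}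

theorem inv_card_pow_smul_sum_miniBatchMean (hB : B ≠ 0) (X : α → E) :
    ((Fintype.card α : ℝ) ^ B)⁻¹ • ∑ s : Fin B → α, miniBatchMean X s
      = (Fintype.card α : ℝ)⁻¹ • ∑ a, X a := by
  have hN : (Fintype.card α : ℝ) ≠ 0 := Nat.cast_ne_zero.2 Fintype.card_ne_zero
  have hsum := card_smul_sum_pi_sum_apply B X
  rw [← eq_inv_smul_iff₀ hN, smul_smul] at hsum
  simp only [miniBatchMean, ← smul_sum, hsum, smul_smul]
  congr 1
  field_simp

theorem inv_card_pow_mul_sum_norm_miniBatchMean_sq (hB : B ≠ 0) (X : α → E) :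
    ((Fintype.card α : ℝ) ^ B)⁻¹ * ∑ s : Fin B → α, ‖miniBatchMean X s‖ ^ 2
      = (B : ℝ)⁻¹ * ((Fintype.card α : ℝ)⁻¹ * ∑ a, ‖X a‖ ^ 2)
        + (1 - (B : ℝ)⁻¹) * ‖(Fintype.card α : ℝ)⁻¹ • ∑ a, X a‖ ^ 2 := by
  have hN : (Fintype.card α : ℝ) ≠ 0 := Nat.cast_ne_zero.2 Fintype.card_ne_zero
  have hsum := sq_card_mul_sum_pi_norm_sum_apply_sq B X
  simp only [miniBatchMean, norm_smul, mul_pow, norm_inv, Real.norm_natCast, ← mul_sum]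
  field_simp
  linear_combination hsum

end Sampling

theorem adaptive_batch_step_le {α β c MU D G S B γ : ℝ} (hα : 0 < α) (hβ : 0 < β) (hc : 0 < c)
    (hD : 0 < D) (hG : 2 * α * D ≤ G) (hS : S ≤ MU ^ 2) (hB : 1 ≤ B) (hBc : c / D ≤ B)
    (hγ : γ = α / (β * (α + MU ^ 2 / (2 * c)))) :
    D - γ * G + β / 2 * γ ^ 2 * (B⁻¹ * S + (1 - B⁻¹) * G)
      ≤ (1 - α ^ 2 / (β * (α + MU ^ 2 / (2 * c)))) * D := by
  set K := α + MU ^ 2 / (2 * c)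
  have hαK : α ≤ K := le_add_of_nonneg_right (by positivity)
  have hK : 0 < K := hα.trans_le hαK
  have hγ_pos : 0 < γ := by rw [hγ]; positivity
  have hβγK : β * γ * K = α := by rw [hγ]; field_simp
  have hβγ : β * γ ≤ 1 := by nlinarith
  have hB_inv : B⁻¹ ≤ D / c := by
    rw [inv_le_comm₀ (by linarith) (by positivity), inv_div]
    exact hBc
  have hS_batch : B⁻¹ * S ≤ 2 * (K - α) * D := by
    calc B⁻¹ * S ≤ B⁻¹ * MU ^ 2 := mul_le_mul_of_nonneg_left hS (by positivity)
      _ ≤ D / c * MU ^ 2 := mul_le_mul_of_nonneg_right hB_inv (sq_nonneg MU)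
      _ = 2 * (K - α) * D := by simp only [K]; field_simp; ring
  have hG_batch : (1 - B⁻¹) * G ≤ G :=
    mul_le_of_le_one_left (by nlinarith) (sub_le_self 1 (by positivity))
  have hα_γ : α ^ 2 / (β * K) = α * γ := by rw [hγ]; field_simp
  have hdescent : 0 ≤ γ * (1 - β * γ / 2) := mul_nonneg hγ_pos.le (by linarith)
  calc D - γ * G + β / 2 * γ ^ 2 * (B⁻¹ * S + (1 - B⁻¹) * G)
      ≤ D - γ * (1 - β * γ / 2) * G + β * γ ^ 2 * (K - α) * D := by
        linarith [mul_le_mul_of_nonneg_left (add_le_add hS_batch hG_batch)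
          (by positivity : 0 ≤ β / 2 * γ ^ 2)]
    _ ≤ D - γ * (1 - β * γ / 2) * (2 * α * D) + β * γ ^ 2 * (K - α) * D := by
        linarith [mul_le_mul_of_nonneg_left hG hdescent]
    _ = (1 - α ^ 2 / (β * K)) * D := by
        rw [hα_γ]
        linear_combination γ * D * hβγK

theorem adaptive_batch_pl_contraction_general
    (d n B : ℕ) (hn : 1 ≤ n) (hB : 1 ≤ B)
    (f : Fin n → EuclideanSpace ℝ (Fin d) → ℝ)
    (hf : ∀ i, Differentiable ℝ (f i))
    (F : EuclideanSpace ℝ (Fin d) → ℝ)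
    (hF : F = fun w => (1 / (n : ℝ)) * ∑ i, f i w)
    (β α : ℝ) (hβ : 0 < β) (hα : 0 < α)
    (hFdiff : Differentiable ℝ F)
    (hsmooth : ∀ x y, ‖gradient F x - gradient F y‖ ≤ β * ‖x - y‖)
    (Fstar : ℝ)
    (hPL : ∀ v, α * (F v - Fstar) ≤ (1 / 2) * ‖gradient F v‖ ^ 2)
    (c MU : ℝ) (hc : 0 < c)
    (w : EuclideanSpace ℝ (Fin d))
    (hw : Fstar < F w)
    (hM : (1 / (n : ℝ)) * ∑ i, ‖gradient (f i) w‖ ^ 2 ≤ MU ^ 2)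
    (hBc : c / (F w - Fstar) ≤ (B : ℝ))
    (γ : ℝ) (hγ : γ = α / (β * (α + MU ^ 2 / (2 * c)))) :
    (1 / (n : ℝ) ^ B) *
        ∑ s : Fin B → Fin n,
          F (w - γ • ((1 / (B : ℝ)) • ∑ j, gradient (f (s j)) w))
      - Fstar
      ≤ (1 - α ^ 2 / (β * (α + MU ^ 2 / (2 * c)))) * (F w - Fstar) := by
  have : Nonempty (Fin n) := ⟨⟨0, hn⟩⟩
  have hB0 : B ≠ 0 := by omega
  set X : Fin n → EuclideanSpace ℝ (Fin d) := fun i => gradient (f i) w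
  have hgrad : gradient F w = (n : ℝ)⁻¹ • ∑ i, X i := by
    rw [hF, ← one_div]
    exact gradient_const_mul_sum hf _ w
  have hstep := inv_card_mul_sum_apply_sub_smul_le hFdiff hsmooth w γ (miniBatchMean (B := B) X)
  rw [Fintype.card_fun, Fintype.card_fin B, Nat.cast_pow, inv_card_pow_smul_sum_miniBatchMean hB0,
    inv_card_pow_mul_sum_norm_miniBatchMean_sq hB0, Fintype.card_fin, ← hgrad,
    real_inner_self_eq_norm_sq] at hstep
  have hbound := adaptive_batch_step_le (G := ‖gradient F w‖ ^ 2)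
    (S := (n : ℝ)⁻¹ * ∑ i, ‖X i‖ ^ 2) hα hβ hc (sub_pos.2 hw) (by linarith [hPL w])
    (by rwa [one_div] at hM) (by exact_mod_cast hB) hBc hγ
  simp only [one_div, miniBatchMean] at hstep ⊢
  linarith

/-- For `F` β-smooth and α-PL with minimum `F*`, with the adaptive batch size
`B ≥ c/(F(w) − F*)` and step size `γ = α/(β(α + M_U²/(2c)))`, one mini-batch SGD step
contracts the expected suboptimality:
`E_s[F(w − γ g_s(w))] − F* ≤ (1 − α²/(β(α + M_U²/(2c))))·(F(w) − F*)`. -/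
theorem adaptive_batch_pl_contraction
    (d n B : ℕ) (hd : 1 ≤ d) (hn : 1 ≤ n) (hB : 1 ≤ B)
    (f : Fin n → EuclideanSpace ℝ (Fin d) → ℝ)
    (hf : ∀ i, Differentiable ℝ (f i))
    (F : EuclideanSpace ℝ (Fin d) → ℝ)
    (hF : F = fun w => (1 / (n : ℝ)) * ∑ i, f i w)
    (β α : ℝ) (hβ : 0 < β) (hα : 0 < α)
    (hFdiff : Differentiable ℝ F)
    (hsmooth : ∀ x y, ‖gradient F x - gradient F y‖ ≤ β * ‖x - y‖)
    (Fstar : ℝ) (hFstar_le : ∀ v, Fstar ≤ F v) (hFstar_att : ∃ v, F v = Fstar)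
    (hPL : ∀ v, α * (F v - Fstar) ≤ (1 / 2) * ‖gradient F v‖ ^ 2)
    (c MU : ℝ) (hc : 0 < c) (hMU : 0 < MU)
    (w : EuclideanSpace ℝ (Fin d))
    (hw : Fstar < F w)
    (hM : (1 / (n : ℝ)) * ∑ i, ‖gradient (f i) w‖ ^ 2 ≤ MU ^ 2)
    (hBc : c / (F w - Fstar) ≤ (B : ℝ))
    (γ : ℝ) (hγ : γ = α / (β * (α + MU ^ 2 / (2 * c)))) :
    (1 / (n : ℝ) ^ B) *
        ∑ s : Fin B → Fin n,
          F (w - γ • ((1 / (B : ℝ)) • ∑ j, gradient (f (s j)) w))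
      - Fstar
      ≤ (1 - α ^ 2 / (β * (α + MU ^ 2 / (2 * c)))) * (F w - Fstar) :=
  adaptive_batch_pl_contraction_general d n B hn hB f hf F hF β α hβ hα hFdiff hsmooth Fstar hPL c
    MU hc w hw hM hBc γ hγ
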